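/- Let n ≥ 1 be an integer, let a < b be real numbers, and let 0 < p < ∞. If f ∈ 𝒟ⁿ([a,b]) satisfies f^{(n)}(t) ≥ n! for every t ∈ (a,b) and ‖f‖_{p,[a,b]} = D**(n,p,[a,b]), then f coincides on [a,b] with a monic real polynomial of degree n. -/

import Mathlib

open Set Polynomial Nat MeasureTheory ENNReal

/-- `fd 0` belongs to `𝒟ⁿ([a,b])`, with `fd k` its `k`-th derivative: `fd k` exists and is
continuous on `[a,b]` for `0 ≤ k ≤ n-1`, and `fd n` is the derivative of `fd (n-1)` on `(a,b)`. -/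
def IsDn (n : ℕ) (a b : ℝ) (fd : ℕ → ℝ → ℝ) : Prop :=
  (∀ k, k + 1 < n → ∀ x ∈ Set.Icc a b, HasDerivWithinAt (fd k) (fd (k + 1) x) (Set.Icc a b) x) ∧
  ContinuousOn (fd (n - 1)) (Set.Icc a b) ∧
  (∀ x ∈ Set.Ioo a b, HasDerivAt (fd (n - 1)) (fd n x) x)

/-- `m_n(f) = inf_{a<t<b} |f^{(n)}(t)|`. -/
noncomputable def mIoo (n : ℕ) (a b : ℝ) (fd : ℕ → ℝ → ℝ) : ℝ :=
  sInf ((fun t => |fd n t|) '' Set.Ioo a b)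

/-- `‖f‖_{p,[a,b]}` for `0 < p < ∞`. -/
noncomputable def Lp (p a b : ℝ) (f : ℝ → ℝ) : ℝ :=
  (∫ t in a..b, |f t| ^ p) ^ (1 / p)

/-- `‖f‖_{∞,[a,b]}`. -/
noncomputable def Lsup (a b : ℝ) (f : ℝ → ℝ) : ℝ :=
  sSup ((fun t => |f t|) '' Set.Icc a b)

/-- `‖f‖_{p,[a,b]}` for `0 < p ≤ ∞`. -/
noncomputable def pnorm (p : ℝ≥0∞) (a b : ℝ) (f : ℝ → ℝ) : ℝ :=
  if p = ⊤ then Lsup a b f else Lp p.toReal a b f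

/-- `D**(n,p,[a,b])`, `p` finite. -/
noncomputable def Dstar (n : ℕ) (p a b : ℝ) : ℝ :=
  sInf { c | ∃ Q : Polynomial ℝ, Q.Monic ∧ Q.natDegree = n ∧ c = Lp p a b (fun x => Q.eval x) }

/-- `D**(n,∞,[a,b])`. -/
noncomputable def DstarInf (n : ℕ) (a b : ℝ) : ℝ :=
  sInf { c | ∃ Q : Polynomial ℝ, Q.Monic ∧ Q.natDegree = n ∧ c = Lsup a b (fun x => Q.eval x) }

/-- `C(n,p)`, `p` finite. -/
noncomputable def Cnp (n : ℕ) (p : ℝ) : ℝ :=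
  sSup { c | ∃ fd : ℕ → ℝ → ℝ, IsDn n 0 1 fd ∧ (∃ x ∈ Set.Icc (0:ℝ) 1, fd 0 x ≠ 0) ∧
    c = mIoo n 0 1 fd / Lp p 0 1 (fd 0) }

/-- `C(n,∞)`. -/
noncomputable def CnpInf (n : ℕ) : ℝ :=
  sSup { c | ∃ fd : ℕ → ℝ → ℝ, IsDn n 0 1 fd ∧ (∃ x ∈ Set.Icc (0:ℝ) 1, fd 0 x ≠ 0) ∧
    c = mIoo n 0 1 fd / Lsup 0 1 (fd 0) }

/-!
By the mean value theorem for divided differences, `f⁽ⁿ⁾ ≥ n!` makes every `n`-th divided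
difference of `f` on `[a,b]` at least `1`. From this alone one builds, one root at a time, a monic
polynomial `W` of degree `n` with `W² ≤ f W` on `[a,b]`: choose a point `e` and a value `v` with
`v (f - v) ≥ 0` such that the divided differences of `(f - v) / (x - e)` of one order lower are
still at least `1` (a limit argument, using only the lower bound on divided differences), recurse,
and put `W = (X - e) V`. Then `|W| ≤ |f|`, so `‖W‖_p ≤ ‖f‖_p = D** ≤ ‖W‖_p`; by continuity
`|f| = |W|` on `[a,b]`, and together with `W² ≤ f W` this gives `f = W`.
-/

open Filter Topology

noncomputable def divDiff (g : ℝ → ℝ) (s : Finset ℝ) : ℝ :=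
  ∑ x ∈ s, g x / ∏ y ∈ s.erase x, (x - y)

def OneLeDivDiffOn (m : ℕ) (F : ℝ → ℝ) (S : Set ℝ) : Prop :=
  ∀ s : Finset ℝ, ↑s ⊆ S → s.card = m + 1 → 1 ≤ divDiff F s

section DivDiff

variable {s t : Finset ℝ} {e x : ℝ}

lemma prod_sub_ne_zero (hx : x ∉ s) : ∏ y ∈ s, (x - y) ≠ 0 :=
  Finset.prod_ne_zero_iff.2 fun _ hy => sub_ne_zero.2 (ne_of_mem_of_not_mem hy hx).symm

lemma divDiff_singleton (g : ℝ → ℝ) (x : ℝ) : divDiff g {x} = g x := by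
  simp [divDiff]

lemma divDiff_const (c : ℝ) (hs : 2 ≤ s.card) : divDiff (fun _ => c) s = 0 := by
  have h := Lagrange.coeff_eq_sum (s := s) (v := id) (Set.injOn_id _) (P := C c)
    (degree_C_le.trans_lt (by exact_mod_cast (by omega : 0 < s.card)))
  rw [coeff_C, if_neg (by omega)] at h
  simpa [divDiff] using h.symm

lemma divDiff_sub_const (g : ℝ → ℝ) (c : ℝ) (hs : 2 ≤ s.card) :
    divDiff (fun x => g x - c) s = divDiff g s := by
  have h := divDiff_const c hs
  simp only [divDiff, sub_div, Finset.sum_sub_distrib] at h ⊢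
  rw [h, sub_zero]

lemma divDiff_insert (G : ℝ → ℝ) (he : e ∉ t) :
    divDiff G (insert e t) = G e / ∏ y ∈ t, (e - y)
      + ∑ z ∈ t, G z / ((z - e) * ∏ y ∈ t.erase z, (z - y)) := by
  rw [divDiff, Finset.sum_insert he, Finset.erase_insert he]
  congr 1
  refine Finset.sum_congr rfl fun z hz => ?_
  have hze : z ≠ e := ne_of_mem_of_not_mem hz he
  rw [Finset.erase_insert_of_ne hze.symm,
    Finset.prod_insert fun h => he (Finset.mem_of_mem_erase h)]

lemma divDiff_slope (G : ℝ → ℝ) (he : e ∉ t) (ht : t.Nonempty) :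
    divDiff (slope G e) t = divDiff G (insert e t) := by
  have hcard : 2 ≤ (insert e t).card := by
    rw [Finset.card_insert_of_notMem he]
    have := ht.card_pos
    omega
  rw [← divDiff_sub_const G (G e) hcard, divDiff_insert _ he, sub_self, zero_div, zero_add,
    divDiff]
  refine Finset.sum_congr rfl fun z _ => ?_
  rw [slope_def_field, div_div]

lemma divDiff_update_insert (F : ℝ → ℝ) (hx : x ∉ s) (w : ℝ) :
    divDiff (Function.update F x w) (insert x s) = w / ∏ y ∈ s, (x - y)
      + ∑ z ∈ s, F z / ((z - x) * ∏ y ∈ s.erase z, (z - y)) := by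
  rw [divDiff_insert _ hx, Function.update_self]
  congr 1
  refine Finset.sum_congr rfl fun z hz => ?_
  rw [Function.update_of_ne (ne_of_mem_of_not_mem hz hx)]

lemma tendsto_divDiff_update_insert (F : ℝ → ℝ) {v : ℝ} (he : e ∉ s) {u w : ℕ → ℝ}
    (hu : Tendsto u atTop (𝓝 e)) (hw : Tendsto w atTop (𝓝 v)) :
    Tendsto (fun k => divDiff (Function.update F (u k) (w k)) (insert (u k) s)) atTop
      (𝓝 (divDiff (Function.update F e v) (insert e s))) := by
  have hus : ∀ᶠ k in atTop, u k ∉ s := hu (s.finite_toSet.isClosed.isOpen_compl.mem_nhds he)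
  rw [divDiff_update_insert F he]
  refine Tendsto.congr' (hus.mono fun k hk => (divDiff_update_insert F hk (w k)).symm) ?_
  refine (hw.div (tendsto_finsetProd _ fun y _ => hu.sub_const y) (prod_sub_ne_zero he)).add
    (tendsto_finsetSum _ fun z hz => tendsto_const_nhds.div
      ((tendsto_const_nhds.sub hu).mul tendsto_const_nhds) ?_)
  exact mul_ne_zero (sub_ne_zero.2 (ne_of_mem_of_not_mem hz he))
    (prod_sub_ne_zero (Finset.notMem_erase z s))

end DivDiff

section Selection

variable {S : Set ℝ} {F : ℝ → ℝ} {m : ℕ}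

lemma one_le_divDiff_slope_update_of_tendsto (hF : OneLeDivDiffOn (m + 1) F S) {e v : ℝ}
    {s : Finset ℝ} (hs : ↑s ⊆ S \ {e}) (hcard : s.card = m + 1) {u w : ℕ → ℝ}
    (huS : ∀ k, u k ∈ S) (hu : Tendsto u atTop (𝓝 e)) (hw : Tendsto w atTop (𝓝 v))
    (hle : ∀ᶠ k in atTop, 0 ≤ (w k - F (u k)) / ∏ y ∈ s, (u k - y)) :
    1 ≤ divDiff (slope (Function.update F e v) e) s := by
  have hes : e ∉ s := fun h => (hs h).2 rfl
  rw [divDiff_slope _ hes (Finset.card_pos.1 (by omega))]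
  refine ge_of_tendsto (tendsto_divDiff_update_insert F hes hu hw) ?_
  filter_upwards [hu (s.finite_toSet.isClosed.isOpen_compl.mem_nhds hes), hle] with k hk hk'
  have h1 := hF (insert (u k) s) (by
    rw [Finset.coe_insert]; exact insert_subset (huS k) (hs.trans sdiff_subset))
    (by rw [Finset.card_insert_of_notMem hk, hcard])
  rw [← Function.update_eq_self (u k) F, divDiff_update_insert F hk] at h1
  rw [divDiff_update_insert F hk]
  rw [sub_div] at hk'
  linarith

lemma exists_slope_update_of_mem_closure (hF : OneLeDivDiffOn (m + 1) F S)
    (hS : IsCompact (closure S)) {v : ℝ} (hv : v ∈ closure (F '' S)) :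
    ∃ e, OneLeDivDiffOn m (slope (Function.update F e v) e) (S \ {e}) := by
  obtain ⟨y, hyS, hy⟩ := mem_closure_iff_seq_limit.1 hv
  choose x hxS hxF using hyS
  obtain ⟨e, -, r, hr, he⟩ := hS.tendsto_subseq fun k => subset_closure (hxS k)
  refine ⟨e, fun s hs hcard => one_le_divDiff_slope_update_of_tendsto hF hs hcard
    (fun k => hxS (r k)) he (hy.comp hr.tendsto_atTop) (Eventually.of_forall fun k => ?_)⟩
  simp [hxF]

lemma exists_slope_update_zero_of_sign_change (hF : OneLeDivDiffOn (m + 1) F S)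
    (hS : IsPreconnected (closure S)) (hneg : ∃ x ∈ S, F x ≤ 0) (hpos : ∃ x ∈ S, 0 < F x) :
    ∃ e, OneLeDivDiffOn m (slope (Function.update F e 0) e) (S \ {e}) := by
  obtain ⟨xn, hxnS, hxn⟩ := hneg
  obtain ⟨xp, hxpS, hxp⟩ := hpos
  set U := {x ∈ S | F x ≤ 0}
  set V := {x ∈ S | 0 < F x}
  obtain ⟨e, -, heU, heV⟩ := isPreconnected_closed_iff.1 hS (closure U) (closure V)
    isClosed_closure isClosed_closure
    (by rw [← closure_union]; exact closure_mono fun x hx =>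
      (le_or_gt (F x) 0).imp (fun h => ⟨hx, h⟩) fun h => ⟨hx, h⟩)
    ⟨xn, subset_closure hxnS, subset_closure ⟨hxnS, hxn⟩⟩
    ⟨xp, subset_closure hxpS, subset_closure ⟨hxpS, hxp⟩⟩
  refine ⟨e, fun s hs hcard => ?_⟩
  set c := ∏ y ∈ s, (e - y)
  have hc : c ≠ 0 := prod_sub_ne_zero fun h => (hs h).2 rfl
  -- approach `e` from the side where `F` has the sign opposite to the sign of `c`
  obtain ⟨u, huS, hu, hFu⟩ : ∃ u : ℕ → ℝ, (∀ k, u k ∈ S) ∧ Tendsto u atTop (𝓝 e) ∧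
      ∀ k, F (u k) * c ≤ 0 := by
    rcases hc.lt_or_gt with hc | hc
    · obtain ⟨u, huV, hu⟩ := mem_closure_iff_seq_limit.1 heV
      exact ⟨u, fun k => (huV k).1, hu, fun k => mul_nonpos_of_nonneg_of_nonpos (huV k).2.le hc.le⟩
    · obtain ⟨u, huU, hu⟩ := mem_closure_iff_seq_limit.1 heU
      exact ⟨u, fun k => (huU k).1, hu, fun k => mul_nonpos_of_nonpos_of_nonneg (huU k).2 hc.le⟩
  refine one_le_divDiff_slope_update_of_tendsto hF hs hcard huS hu tendsto_const_nhds ?_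
  have hsign : ∀ᶠ k in atTop, 0 < (∏ y ∈ s, (u k - y)) * c :=
    ((tendsto_finsetProd _ fun y _ => hu.sub_const y).mul_const c).eventually
      (lt_mem_nhds (mul_self_pos.2 hc))
  filter_upwards [hsign] with k hk
  rw [zero_sub, neg_div, neg_nonneg, ← mul_div_mul_right _ _ hc]
  exact div_nonpos_of_nonpos_of_nonneg (hFu k) hk.le

/-- `v` is `inf F` or `sup F` on `S` when `F` has a constant sign there, and `0` otherwise. -/
lemma exists_slope_update (hF : OneLeDivDiffOn (m + 1) F S) (hne : S.Nonempty)
    (hcpt : IsCompact (closure S)) (hconn : IsPreconnected (closure S)) :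
    ∃ e v, (∀ x ∈ S, 0 ≤ v * (F x - v)) ∧
      OneLeDivDiffOn m (slope (Function.update F e v) e) (S \ {e}) := by
  by_cases hpos : ∀ x ∈ S, 0 < F x
  · have hbdd : BddBelow (F '' S) := ⟨0, forall_mem_image.2 fun x hx => (hpos x hx).le⟩
    have hv0 : 0 ≤ sInf (F '' S) :=
      le_csInf (hne.image F) (forall_mem_image.2 fun x hx => (hpos x hx).le)
    obtain ⟨e, he⟩ :=
      exists_slope_update_of_mem_closure hF hcpt (csInf_mem_closure (hne.image F) hbdd)
    exact ⟨e, _, fun x hx => mul_nonneg hv0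
      (sub_nonneg.2 (csInf_le hbdd (mem_image_of_mem F hx))), he⟩
  by_cases hnonpos : ∀ x ∈ S, F x ≤ 0
  · have hbdd : BddAbove (F '' S) := ⟨0, forall_mem_image.2 hnonpos⟩
    have hv0 : sSup (F '' S) ≤ 0 := csSup_le (hne.image F) (forall_mem_image.2 hnonpos)
    obtain ⟨e, he⟩ :=
      exists_slope_update_of_mem_closure hF hcpt (csSup_mem_closure (hne.image F) hbdd)
    exact ⟨e, _, fun x hx => mul_nonneg_of_nonpos_of_nonpos hv0
      (sub_nonpos.2 (le_csSup hbdd (mem_image_of_mem F hx))), he⟩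
  push Not at hpos hnonpos
  obtain ⟨e, he⟩ := exists_slope_update_zero_of_sign_change hF hconn hpos hnonpos
  exact ⟨e, 0, fun x _ => by simp, he⟩

end Selection

lemma closure_Icc_diff_finset {a b : ℝ} (hab : a < b) (T : Finset ℝ) :
    closure (Icc a b \ ↑T) = Icc a b := by
  refine (closure_minimal sdiff_subset isClosed_Icc).antisymm ?_
  calc Icc a b = closure (Ioo a b) := (closure_Ioo hab.ne).symm
    _ ⊆ closure (Ioo a b ∩ (↑T)ᶜ) :=
      closure_minimal ((T.finite_toSet.countable.dense_compl ℝ).open_subset_closure_inter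
        isOpen_Ioo) isClosed_closure
    _ ⊆ closure (Icc a b \ ↑T) := closure_mono fun x hx => ⟨Ioo_subset_Icc_self hx.1, hx.2⟩

lemma sq_mul_le_add_mul_mul {A B c v : ℝ} (hAB : A ^ 2 ≤ B * A) (hv : 0 ≤ v * (c * B)) :
    (c * A) ^ 2 ≤ (v + c * B) * (c * A) := by
  have hvA : 0 ≤ v * (c * A) := by
    rcases eq_or_ne A 0 with rfl | hA
    · simp
    have hAB' : 0 < B * A := (sq_pos_of_ne_zero hA).trans_le hAB
    exact nonneg_of_mul_nonneg_left (by nlinarith : 0 ≤ v * (c * A) * (B * A)) hAB'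
  nlinarith [mul_le_mul_of_nonneg_left hAB (sq_nonneg c)]

theorem exists_monic_sq_le_mul {a b : ℝ} (hab : a < b) {m : ℕ} (T : Finset ℝ) {F : ℝ → ℝ}
    (hF : OneLeDivDiffOn m F (Icc a b \ ↑T)) :
    ∃ W : ℝ[X], W.Monic ∧ W.natDegree = m ∧
      ∀ x ∈ Icc a b \ ↑T, W.eval x ^ 2 ≤ F x * W.eval x := by
  induction m generalizing T F with
  | zero =>
    refine ⟨1, monic_one, natDegree_one, fun x hx => ?_⟩
    have h := hF {x} (by simpa using hx) rfl
    rw [divDiff_singleton] at h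
    simpa using h
  | succ m ih =>
    have hcl := closure_Icc_diff_finset hab T
    obtain ⟨e, v, hv, hslope⟩ := exists_slope_update hF
      (closure_nonempty_iff.1 (by rw [hcl]; exact nonempty_Icc.2 hab.le))
      (by rw [hcl]; exact isCompact_Icc) (by rw [hcl]; exact isPreconnected_Icc)
    have hS : (Icc a b \ ↑T) \ {e} = Icc a b \ ↑(insert e T) := by
      rw [Finset.coe_insert, sdiff_sdiff, union_comm, ← insert_eq]
    obtain ⟨V, hVm, hVd, hV⟩ := ih (insert e T) (hS ▸ hslope)
    refine ⟨(X - C e) * V, (monic_X_sub_C e).mul hVm, ?_, fun x hx => ?_⟩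
    · rw [natDegree_mul (X_sub_C_ne_zero e) hVm.ne_zero, natDegree_X_sub_C, hVd, add_comm]
    rcases eq_or_ne x e with rfl | hxe
    · simp
    have hFx : (x - e) * slope (Function.update F e v) e x = F x - v := by
      simpa [Function.update_of_ne hxe] using sub_smul_slope (Function.update F e v) e x
    rw [eval_mul, eval_sub, eval_X, eval_C, ← add_sub_cancel v (F x), ← hFx]
    exact sq_mul_le_add_mul_mul (hV x (hS ▸ ⟨hx, hxe⟩)) (hFx ▸ hv x hx)

section Rolle

variable {a b : ℝ}

lemma exists_finset_hasDerivAt_eq_zero {f f' : ℝ → ℝ} {s : Finset ℝ} (hs : ↑s ⊆ Icc a b)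
    (hf : ContinuousOn f (Icc a b)) (hf' : ∀ x ∈ Ioo a b, HasDerivAt f (f' x) x)
    (hzero : ∀ x ∈ s, f x = 0) :
    ∃ t : Finset ℝ, ↑t ⊆ Ioo a b ∧ s.card ≤ t.card + 1 ∧ ∀ x ∈ t, f' x = 0 := by
  have hrolle : ∀ p ∈ (s ×ˢ s).filter (fun p => p.1 < p.2), ∃ z ∈ Ioo p.1 p.2, f' z = 0 := by
    intro p hp
    simp only [Finset.mem_filter, Finset.mem_product] at hp
    obtain ⟨⟨h1, h2⟩, hlt⟩ := hp
    have hsub : Icc p.1 p.2 ⊆ Icc a b := Icc_subset_Icc (hs h1).1 (hs h2).2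
    exact exists_hasDerivAt_eq_zero hlt (hf.mono hsub) (by rw [hzero _ h1, hzero _ h2])
      fun x hx => hf' x (Ioo_subset_Ioo (hs h1).1 (hs h2).2 hx)
  choose! ξ hξ hξ0 using hrolle
  refine ⟨((s ×ˢ s).filter (fun p => p.1 < p.2)).image ξ, ?_, ?_, ?_⟩
  · intro z hz
    obtain ⟨p, hp, rfl⟩ := Finset.mem_image.1 hz
    have hp' := Finset.mem_filter.1 hp
    exact Ioo_subset_Ioo (hs (Finset.mem_product.1 hp'.1).1).1 (hs (Finset.mem_product.1 hp'.1).2).2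
      (hξ p hp)
  · refine Finset.card_le_of_interleaved fun x hx y hy hxy _ => ?_
    have hxy' : (x, y) ∈ (s ×ˢ s).filter (fun p => p.1 < p.2) :=
      Finset.mem_filter.2 ⟨Finset.mem_product.2 ⟨hx, hy⟩, hxy⟩
    exact ⟨ξ (x, y), Finset.mem_image_of_mem _ hxy', hξ _ hxy'⟩
  · intro z hz
    obtain ⟨p, hp, rfl⟩ := Finset.mem_image.1 hz
    exact hξ0 p hp

theorem exists_eq_zero_of_iterate_hasDerivAt {g : ℕ → ℝ → ℝ} {n : ℕ} (hn : 0 < n)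
    (hcont : ∀ k < n, ContinuousOn (g k) (Icc a b))
    (hderiv : ∀ k < n, ∀ x ∈ Ioo a b, HasDerivAt (g k) (g (k + 1) x) x)
    {s : Finset ℝ} (hs : ↑s ⊆ Icc a b) (hcard : n < s.card) (hzero : ∀ x ∈ s, g 0 x = 0) :
    ∃ ξ ∈ Ioo a b, g n ξ = 0 := by
  have key : ∀ k < n, ∃ t : Finset ℝ, ↑t ⊆ Ioo a b ∧ n ≤ t.card + k ∧ ∀ x ∈ t, g (k + 1) x = 0 := by
    intro k hk
    induction k with
    | zero =>
      obtain ⟨t, ht, htcard, htzero⟩ :=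
        exists_finset_hasDerivAt_eq_zero hs (hcont 0 hn) (hderiv 0 hn) hzero
      exact ⟨t, ht, by omega, htzero⟩
    | succ k ih =>
      obtain ⟨t, ht, htcard, htzero⟩ := ih (by omega)
      obtain ⟨t', ht', ht'card, ht'zero⟩ := exists_finset_hasDerivAt_eq_zero
        (ht.trans Ioo_subset_Icc_self) (hcont (k + 1) hk) (hderiv (k + 1) hk) htzero
      exact ⟨t', ht', by omega, ht'zero⟩
  obtain ⟨t, ht, htcard, htzero⟩ := key (n - 1) (by omega)
  obtain ⟨ξ, hξ⟩ := Finset.card_pos.1 (by omega : 0 < t.card)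
  exact ⟨ξ, ht hξ, by simpa [Nat.sub_add_cancel hn] using htzero ξ hξ⟩

end Rolle

namespace IsDn

variable {n k : ℕ} {a b : ℝ} {fd : ℕ → ℝ → ℝ}

lemma continuousOn (hf : IsDn n a b fd) (hk : k < n) : ContinuousOn (fd k) (Icc a b) := by
  rcases (Nat.le_sub_one_of_lt hk).eq_or_lt with rfl | hk'
  · exact hf.2.1
  · exact fun x hx => (hf.1 k (by omega) x hx).continuousWithinAt

lemma hasDerivAt (hf : IsDn n a b fd) (hk : k < n) {x : ℝ} (hx : x ∈ Ioo a b) :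
    HasDerivAt (fd k) (fd (k + 1) x) x := by
  rcases (Nat.le_sub_one_of_lt hk).eq_or_lt with rfl | hk'
  · rw [Nat.sub_add_cancel (by omega : 1 ≤ n)]
    exact hf.2.2 x hx
  · exact (hf.1 k (by omega) x (Ioo_subset_Icc_self hx)).hasDerivAt (Icc_mem_nhds hx.1 hx.2)

theorem exists_divDiff_eq (hf : IsDn n a b fd) (hn : 0 < n) {s : Finset ℝ}
    (hs : ↑s ⊆ Icc a b) (hcard : s.card = n + 1) :
    ∃ ξ ∈ Ioo a b, divDiff (fd 0) s = fd n ξ / n ! := by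
  set P := Lagrange.interpolate s id (fd 0)
  have hPnode : ∀ x ∈ s, P.eval x = fd 0 x := fun x hx =>
    Lagrange.eval_interpolate_at_node (fd 0) (Set.injOn_id _) hx
  have hPn : ∀ x, (derivative^[n] P).eval x = n ! * divDiff (fd 0) s := fun x => by
    rw [Lagrange.eval_iterate_derivative_eq_sum (Set.injOn_id _)
      (Lagrange.degree_interpolate_lt _ (Set.injOn_id _)) (by omega) x, hcard, divDiff]
    congr 1
    refine Finset.sum_congr rfl fun x hx => ?_
    simp only [id, Nat.sub_self, Finset.powersetCard_zero, Finset.sum_singleton,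
      Finset.prod_empty, mul_one]
    rw [← hPnode x hx]
  obtain ⟨ξ, hξ, h0⟩ := exists_eq_zero_of_iterate_hasDerivAt
    (g := fun k x => fd k x - (derivative^[k] P).eval x) hn
    (fun k hk => (hf.continuousOn hk).sub (derivative^[k] P).continuousOn)
    (fun k hk x hx => by
      simp only [Function.iterate_succ_apply']
      exact (hf.hasDerivAt hk hx).sub ((derivative^[k] P).hasDerivAt x))
    hs (by omega) (fun x hx => by simp [hPnode x hx])
  refine ⟨ξ, hξ, ?_⟩
  rw [_root_.eq_div_iff (by positivity), sub_eq_zero.1 h0, hPn, mul_comm]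

end IsDn

lemma abs_le_abs_of_sq_le_mul {x y : ℝ} (h : y ^ 2 ≤ x * y) : |y| ≤ |x| := by
  rcases eq_or_ne y 0 with rfl | hy
  · simp
  refine le_of_mul_le_mul_right ?_ (abs_pos.2 hy)
  calc |y| * |y| = y ^ 2 := by rw [abs_mul_abs_self, sq]
    _ ≤ x * y := h
    _ ≤ |x| * |y| := abs_mul x y ▸ le_abs_self _

lemma eq_of_sq_le_mul_of_abs_eq {x y : ℝ} (h : y ^ 2 ≤ x * y) (habs : |x| = |y|) : x = y := by
  have hsq : x ^ 2 = y ^ 2 := sq_eq_sq_iff_abs_eq_abs _ _ |>.2 habs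
  have h0 : (x - y) ^ 2 ≤ 0 := by nlinarith
  exact sub_eq_zero.1 (pow_eq_zero_iff two_ne_zero |>.1 (h0.antisymm (sq_nonneg _)))

section LpNorm

variable {p a b : ℝ}

lemma Lp_nonneg (hab : a ≤ b) (f : ℝ → ℝ) : 0 ≤ Lp p a b f :=
  Real.rpow_nonneg (intervalIntegral.integral_nonneg hab fun _ _ => by positivity) _

lemma Dstar_le_Lp (hab : a ≤ b) {n : ℕ} {Q : ℝ[X]} (hQ : Q.Monic) (hQn : Q.natDegree = n) :
    Dstar n p a b ≤ Lp p a b (fun x => Q.eval x) :=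
  csInf_le ⟨0, by rintro _ ⟨R, -, -, rfl⟩; exact Lp_nonneg hab _⟩ ⟨Q, hQ, hQn, rfl⟩

lemma abs_eqOn_of_Lp_le (hab : a < b) (hp : 0 < p) {f g : ℝ → ℝ}
    (hf : ContinuousOn f (Icc a b)) (hg : ContinuousOn g (Icc a b))
    (hle : ∀ x ∈ Icc a b, |g x| ≤ |f x|) (hLp : Lp p a b f ≤ Lp p a b g) :
    ∀ x ∈ Icc a b, |f x| = |g x| := by
  have hint : ∫ t in a..b, |f t| ^ p ≤ ∫ t in a..b, |g t| ^ p :=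
    (Real.rpow_le_rpow_iff (intervalIntegral.integral_nonneg hab.le fun _ _ => by positivity)
      (intervalIntegral.integral_nonneg hab.le fun _ _ => by positivity) (one_div_pos.2 hp)).1 hLp
  intro x hx
  by_contra hne
  exact hint.not_gt (intervalIntegral.integral_lt_integral_of_continuousOn_of_le_of_exists_lt hab
    (hg.abs.rpow_const fun _ _ => Or.inr hp.le) (hf.abs.rpow_const fun _ _ => Or.inr hp.le)
    (fun y hy => Real.rpow_le_rpow (abs_nonneg _) (hle y (Ioc_subset_Icc_self hy)) hp.le)
    ⟨x, hx, Real.rpow_lt_rpow (abs_nonneg _) ((hle x hx).lt_of_ne fun h => hne h.symm) hp⟩)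

lemma eqOn_of_sq_le_mul_of_Lp_le (hab : a < b) (hp : 0 < p) {f g : ℝ → ℝ}
    (hf : ContinuousOn f (Icc a b)) (hg : ContinuousOn g (Icc a b))
    (hsq : ∀ x ∈ Icc a b, g x ^ 2 ≤ f x * g x) (hLp : Lp p a b f ≤ Lp p a b g) :
    ∀ x ∈ Icc a b, f x = g x := fun x hx =>
  eq_of_sq_le_mul_of_abs_eq (hsq x hx)
    (abs_eqOn_of_Lp_le hab hp hf hg (fun y hy => abs_le_abs_of_sq_le_mul (hsq y hy)) hLp x hx)

end LpNorm

/-- For `0 < p < ∞`, if `f ∈ 𝒟ⁿ([a,b])` has `f^{(n)} ≥ n!` on `(a,b)` and `‖f‖_p` equals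
`D**(n,p,[a,b])`, then `f` coincides on `[a,b]` with a monic polynomial of degree `n`. -/
theorem stmt4 (n : ℕ) (hn : 1 ≤ n) (a b : ℝ) (hab : a < b) (p : ℝ) (hp : 0 < p)
    (fd : ℕ → ℝ → ℝ) (hf : IsDn n a b fd)
    (hderiv : ∀ t ∈ Set.Ioo a b, (n ! : ℝ) ≤ fd n t)
    (hnorm : Lp p a b (fd 0) = Dstar n p a b) :
    ∃ Q : Polynomial ℝ, Q.Monic ∧ Q.natDegree = n ∧
      ∀ x ∈ Set.Icc a b, fd 0 x = Q.eval x := by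
  have hDD : OneLeDivDiffOn n (fd 0) (Icc a b \ ↑(∅ : Finset ℝ)) := by
    intro s hs hcard
    obtain ⟨ξ, hξ, heq⟩ := hf.exists_divDiff_eq hn (by simpa using hs) hcard
    rw [heq, one_le_div (by positivity)]
    exact hderiv ξ hξ
  obtain ⟨W, hWm, hWn, hW⟩ := exists_monic_sq_le_mul hab ∅ hDD
  refine ⟨W, hWm, hWn, eqOn_of_sq_le_mul_of_Lp_le hab hp (hf.continuousOn hn)
    W.continuousOn (by simpa using hW) ?_⟩
  exact hnorm ▸ Dstar_le_Lp hab.le hWm hWn
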